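/- arXiv:2301.09619 — 4 statements merged into one kernel-verified Lean document; each statement's English description precedes it below -/
import Mathlib

section
/- Let Γ be an arbitrary finite normal-form game with N players and influence bound δ. If every player's exploration rate satisfies T_k > δ(N − 1), then Γ has a unique Quantal Response Equilibrium x̄ with exploration rates (T_k), and every interior solution x(t) of the smooth Q-Learning dynamics converges to x̄ as t → ∞. -/
/-
STATEMENT 0: Let Γ be an arbitrary finite normal-form game with N players and
influence bound δ. If every player's exploration rate satisfies T_k > δ(N − 1),
then Γ has a unique Quantal Response Equilibrium x̄ with exploration rates (T_k),
and every interior solution x(t) of the smooth Q-Learning dynamics converges to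
x̄ as t → ∞.
-/

open Filter Topology

noncomputable section

/-- Joint strategy space: a mixed strategy for each of the `N` players. -/
abbrev Strat {N : ℕ} (n : Fin N → ℕ) := ∀ k, Fin (n k) → ℝ

/-- `x` lies in the product of standard simplices `Δ = Δ₁ × ⋯ × Δ_N`. -/
def JointSimplex {N : ℕ} {n : Fin N → ℕ} (x : Strat n) : Prop :=
  ∀ k, x k ∈ stdSimplex ℝ (Fin (n k))

/-- `x` lies in the interior of `Δ` (all components positive). -/
def JointInterior {N : ℕ} {n : Fin N → ℕ} (x : Strat n) : Prop :=
  ∀ k, (∀ i, 0 < x k i) ∧ ∑ i, x k i = 1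

/-- Quantal Response Equilibrium for reward functions `r` and exploration rates `T`. -/
def IsQRE {N : ℕ} {n : Fin N → ℕ} (r : Strat n → Strat n) (T : Fin N → ℝ) (x : Strat n) : Prop :=
  JointSimplex x ∧
    ∀ k i, x k i = Real.exp (r x k i / T k) / ∑ j, Real.exp (r x k j / T k)

/-- An interior solution of the smooth Q-Learning dynamics
`ẋ_{ki}/x_{ki} = r_{ki}(x) − ⟨x_k, r_k(x)⟩ − T_k (ln x_{ki} − ⟨x_k, ln x_k⟩)`. -/
def QLSolution {N : ℕ} {n : Fin N → ℕ} (r : Strat n → Strat n) (T : Fin N → ℝ)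
    (x : ℝ → Strat n) : Prop :=
  (∀ t, JointInterior (x t)) ∧
    ∀ t k i, HasDerivAt (fun s => x s k i)
      (x t k i * (r (x t) k i - (∑ j, x t k j * r (x t) k j)
        - T k * (Real.log (x t k i) - ∑ j, x t k j * Real.log (x t k j)))) t

/-- The multilinear (expected) reward of action `i` of player `k` in a finite
normal-form game with pure rewards `rPure` (a function of the opponents' pure profile). -/
def mixedReward {N : ℕ} {n : Fin N → ℕ}
    (rPure : ∀ k : Fin N, Fin (n k) → (∀ l : {l : Fin N // l ≠ k}, Fin (n l.1)) → ℝ) :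
    Strat n → Strat n :=
  fun x k i => ∑ s : ∀ l : {l : Fin N // l ≠ k}, Fin (n l.1),
    (∏ l, x l.1 (s l)) * rPure k i s

/-!
The QRE are the fixed points of the smoothed best response `x ↦ softmax (r(x) / T)`. By the
symmetric Pinsker inequality `‖p - q‖₁² ≤ ⟨p - q, log p - log q⟩`, softmax is 1-Lipschitz from
`ℓ^∞` to `ℓ¹`, and changing one opponent's strategy moves every expected reward by at most `δ`
times the `ℓ¹` size of the change. Hence the smoothed best response contracts the `ℓ¹` distance
on `Δ` by the factor `δ (N - 1) / min T < 1`, and Banach's theorem gives a unique QRE `p`.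

Along an interior solution, `V = ∑ₖ KL(pₖ ‖ xₖ)` has derivative
`-∑ₖ (⟨pₖ - xₖ, rₖ(x) - rₖ(p)⟩ + Tₖ ⟨pₖ - xₖ, log pₖ - log xₖ⟩)`, because
`rₖ(p) - Tₖ log pₖ` is constant. The second pairing dominates both `‖pₖ - xₖ‖₁²` and
`KL(pₖ ‖ xₖ)`, while the first is at least `-δ ‖pₖ - xₖ‖₁ ∑_{l ≠ k} ‖p_l - x_l‖₁`; summing,
`V' ≤ -(min T - δ (N - 1)) V`. So `V` decays exponentially, and with it every `|x_{ki} - p_{ki}|`.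
-/

open Real Finset

namespace Real

theorem two_mul_sub_div_add_le_log_sub_log {p q : ℝ} (hq : 0 < q) (hqp : q ≤ p) :
    2 * (p - q) / (p + q) ≤ log p - log q := by
  rcases hqp.eq_or_lt with rfl | hqp
  · simp
  have ha : 0 < q / (p - q) := div_pos hq (sub_pos.2 hqp)
  have hu : 1 / (2 * (q / (p - q)) + 1) = (p - q) / (p + q) := by
    have : p + q ≠ 0 := by linarith
    field_simp; ring
  have hlog : log (1 + (q / (p - q))⁻¹) = log p - log q := by
    rw [← log_div (by linarith) hq.ne', inv_div, one_add_div hq.ne']; ring_nf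
  -- the first term of a series for `log (p / q)` whose terms are all nonnegative
  have := le_hasSum (hasSum_log_one_add_inv ha) 0 fun k _ => by
    rw [hu]; have : 0 ≤ (p - q) / (p + q) := div_nonneg (by linarith) (by linarith)
    positivity
  simpa only [hu, hlog, mul_div_assoc, Nat.cast_zero, mul_zero, zero_add, div_one, pow_one,
    mul_one] using this

theorem two_mul_sq_div_add_le_sub_mul_log_sub {p q : ℝ} (hp : 0 < p) (hq : 0 < q) :
    2 * (p - q) ^ 2 / (p + q) ≤ (p - q) * (log p - log q) := by
  wlog hqp : q ≤ p generalizing p q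
  · have := this hq hp (le_of_not_ge hqp)
    convert this using 1 <;> ring
  have := mul_le_mul_of_nonneg_left (two_mul_sub_div_add_le_log_sub_log hq hqp)
    (sub_nonneg.2 hqp)
  calc 2 * (p - q) ^ 2 / (p + q) = (p - q) * (2 * (p - q) / (p + q)) := by ring
    _ ≤ _ := this

theorem sq_sub_div_two_le_mul_log_sub_add_sub {p q : ℝ} (hp : 0 < p) (hp1 : p ≤ 1)
    (hq : 0 < q) (hq1 : q ≤ 1) :
    (q - p) ^ 2 / 2 ≤ p * (log p - log q) + (q - p) := by
  rcases le_total q p with hqp | hpq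
  · have h := mul_le_mul_of_nonneg_left (two_mul_sub_div_add_le_log_sub_log hq hqp) hp.le
    have : (q - p) ^ 2 / 2 ≤ (q - p) ^ 2 / (p + q) :=
      div_le_div_of_nonneg_left (sq_nonneg _) (by linarith) (by linarith)
    have e : p * (2 * (p - q) / (p + q)) + (q - p) = (q - p) ^ 2 / (p + q) := by
      field_simp; ring
    linarith
  · -- `log (q / p) ≤ sinh (log (q / p))`
    have h := self_le_sinh_iff.2 (sub_nonneg.2 (log_le_log hp hpq))
    rw [sinh_eq, neg_sub, exp_sub, exp_sub, exp_log hp, exp_log hq] at h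
    have : (q - p) ^ 2 / 2 ≤ (q - p) ^ 2 / (2 * q) :=
      div_le_div_of_nonneg_left (sq_nonneg _) (by linarith) (by linarith)
    have e : -p * ((q / p - p / q) / 2) + (q - p) = (q - p) ^ 2 / (2 * q) := by
      field_simp; ring
    nlinarith

end Real

section ProbabilityVector

variable {ι : Type*} [Fintype ι]

theorem abs_sum_mul_le_of_sum_eq_zero {v g : ι → ℝ} {c : ℝ} (hv : ∑ i, v i = 0)
    (hg : ∀ i j, |g i - g j| ≤ c) : |∑ i, v i * g i| ≤ c * ∑ i, |v i| := by
  cases isEmpty_or_nonempty ι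
  · simp
  obtain ⟨i₀⟩ := ‹Nonempty ι›
  have : ∑ i, v i * g i = ∑ i, v i * (g i - g i₀) := by
    simp only [mul_sub, sum_sub_distrib, ← sum_mul, hv, zero_mul, sub_zero]
  rw [this, mul_sum]
  refine (abs_sum_le_sum_abs _ _).trans (sum_le_sum fun i _ => ?_)
  rw [abs_mul, mul_comm]
  exact mul_le_mul_of_nonneg_right (hg i i₀) (abs_nonneg _)

def relEntropy (p q : ι → ℝ) : ℝ := ∑ i, p i * (log (p i) - log (q i))

variable {p q : ι → ℝ}

theorem sum_sq_sub_div_two_le_relEntropy (hp : ∀ i, 0 < p i) (hq : ∀ i, 0 < q i)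
    (hp1 : ∑ i, p i = 1) (hq1 : ∑ i, q i = 1) :
    ∑ i, (q i - p i) ^ 2 / 2 ≤ relEntropy p q := by
  have hle {r : ι → ℝ} (hr : ∀ i, 0 < r i) (hr1 : ∑ i, r i = 1) (i : ι) : r i ≤ 1 :=
    hr1 ▸ single_le_sum (fun j _ => (hr j).le) (mem_univ i)
  calc ∑ i, (q i - p i) ^ 2 / 2
      ≤ ∑ i, (p i * (log (p i) - log (q i)) + (q i - p i)) := sum_le_sum fun i _ =>
        sq_sub_div_two_le_mul_log_sub_add_sub (hp i) (hle hp hp1 i) (hq i) (hle hq hq1 i)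
    _ = relEntropy p q := by simp [relEntropy, sum_add_distrib, hp1, hq1]

theorem relEntropy_nonneg (hp : ∀ i, 0 < p i) (hq : ∀ i, 0 < q i)
    (hp1 : ∑ i, p i = 1) (hq1 : ∑ i, q i = 1) : 0 ≤ relEntropy p q :=
  (sum_nonneg fun i _ => by positivity).trans (sum_sq_sub_div_two_le_relEntropy hp hq hp1 hq1)

theorem relEntropy_le_sum_sub_mul_log_sub (hp : ∀ i, 0 < p i) (hq : ∀ i, 0 < q i)
    (hp1 : ∑ i, p i = 1) (hq1 : ∑ i, q i = 1) :
    relEntropy p q ≤ ∑ i, (p i - q i) * (log (p i) - log (q i)) := by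
  have h := relEntropy_nonneg hq hp hq1 hp1
  have : ∑ i, (p i - q i) * (log (p i) - log (q i)) = relEntropy p q + relEntropy q p := by
    simp only [relEntropy, ← sum_add_distrib]
    exact sum_congr rfl fun i _ => by ring
  linarith

/-- A symmetric form of Pinsker's inequality. -/
theorem sq_sum_abs_sub_le_sum_sub_mul_log_sub (hp : ∀ i, 0 < p i) (hq : ∀ i, 0 < q i)
    (hp1 : ∑ i, p i = 1) (hq1 : ∑ i, q i = 1) :
    (∑ i, |p i - q i|) ^ 2 ≤ ∑ i, (p i - q i) * (log (p i) - log (q i)) := by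
  have hmid : ∑ i, (p i + q i) / 2 = 1 := by
    rw [← sum_div, sum_add_distrib, hp1, hq1]; norm_num
  calc (∑ i, |p i - q i|) ^ 2
      = (∑ i, |p i - q i|) ^ 2 / ∑ i, (p i + q i) / 2 := by rw [hmid, div_one]
    _ ≤ ∑ i, |p i - q i| ^ 2 / ((p i + q i) / 2) :=
        sq_sum_div_le_sum_sq_div _ _ fun i _ => by linarith [hp i, hq i]
    _ ≤ _ := sum_le_sum fun i _ => by
        rw [sq_abs, div_div_eq_mul_div, mul_comm]
        exact two_mul_sq_div_add_le_sub_mul_log_sub (hp i) (hq i)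

end ProbabilityVector

section Softmax

variable {ι : Type*} [Fintype ι]

def softmax (a : ι → ℝ) : ι → ℝ := fun i => exp (a i) / ∑ j, exp (a j)

variable [Nonempty ι] (a : ι → ℝ)

theorem sum_exp_pos : 0 < ∑ j, exp (a j) := sum_pos (fun _ _ => exp_pos _) univ_nonempty

theorem softmax_pos (i : ι) : 0 < softmax a i := div_pos (exp_pos _) (sum_exp_pos a)

theorem sum_softmax : ∑ i, softmax a i = 1 := by
  simp only [softmax, ← sum_div, div_self (sum_exp_pos a).ne']

theorem log_softmax (i : ι) : log (softmax a i) = a i - log (∑ j, exp (a j)) := by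
  rw [softmax, log_div (exp_pos _).ne' (sum_exp_pos a).ne', log_exp]

theorem sum_abs_softmax_sub_le {b : ι → ℝ} {ε : ℝ} (hab : ∀ i, |a i - b i| ≤ ε) :
    ∑ i, |softmax a i - softmax b i| ≤ ε := by
  set d := ∑ i, |softmax a i - softmax b i|
  have hd : d ^ 2 ≤ ε * d := calc
    d ^ 2 ≤ ∑ i, (softmax a i - softmax b i) * (log (softmax a i) - log (softmax b i)) :=
        sq_sum_abs_sub_le_sum_sub_mul_log_sub (softmax_pos a) (softmax_pos b)
          (sum_softmax a) (sum_softmax b)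
    _ = ∑ i, (softmax a i - softmax b i) * (a i - b i) := by
        simp only [log_softmax, sub_sub_sub_comm _ (log _), mul_sub _ (a _ - b _), sum_sub_distrib,
          ← sum_mul, sum_softmax, sub_self, zero_mul, sub_zero]
    _ ≤ ε * d := by
        rw [mul_sum]
        refine (le_abs_self _).trans ((abs_sum_le_sum_abs _ _).trans (sum_le_sum fun i _ => ?_))
        rw [abs_mul, mul_comm]
        exact mul_le_mul_of_nonneg_right (hab i) (abs_nonneg _)
  have hε : 0 ≤ ε := (abs_nonneg _).trans (hab (Classical.arbitrary ι))
  have hd0 : 0 ≤ d := sum_nonneg fun i _ => abs_nonneg _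
  nlinarith

end Softmax

section ProductExpectation

variable {ι : Type*} [Fintype ι] [DecidableEq ι] {κ : ι → Type*} [∀ l, Fintype (κ l)]

def prodExpect (z : ∀ l, κ l → ℝ) (c : (∀ l, κ l) → ℝ) : ℝ := ∑ s, (∏ l, z l (s l)) * c s

theorem prodExpect_eq_sum_mul (z : ∀ l, κ l → ℝ) (c : (∀ l, κ l) → ℝ) (l₀ : ι) :
    prodExpect z c = ∑ j, z l₀ j * prodExpect (fun l : {l // l ≠ l₀} => z l)
      (fun t => c ((Equiv.piSplitAt l₀ κ).symm (j, t))) := by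
  simp only [prodExpect, mul_sum]
  rw [← (Equiv.piSplitAt l₀ κ).symm.sum_comp, Fintype.sum_prod_type]
  refine sum_congr rfl fun j _ => sum_congr rfl fun t _ => ?_
  rw [Fintype.prod_eq_mul_prod_subtype_ne _ l₀, mul_assoc]
  congr 2
  · simp [Equiv.piSplitAt_symm_apply]
  · refine Fintype.prod_congr _ _ fun l => ?_
    simp [Equiv.piSplitAt_symm_apply, l.2]

variable {z : ∀ l, κ l → ℝ} {c : (∀ l, κ l) → ℝ} {δ : ℝ}

theorem abs_prodExpect_le (hz : ∀ l, z l ∈ stdSimplex ℝ (κ l)) (hc : ∀ s, |c s| ≤ δ) :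
    |prodExpect z c| ≤ δ := by
  have hw (s : (l : ι) → κ l) : 0 ≤ ∏ l, z l (s l) := prod_nonneg fun l _ => (hz l).1 _
  calc |prodExpect z c| ≤ ∑ s : ∀ l, κ l, (∏ l, z l (s l)) * δ := by
        refine (abs_sum_le_sum_abs _ _).trans (sum_le_sum fun s _ => ?_)
        rw [abs_mul, abs_of_nonneg (hw s)]
        exact mul_le_mul_of_nonneg_left (hc s) (hw s)
    _ = δ := by rw [← sum_mul, ← Fintype.prod_sum, prod_eq_one fun l _ => (hz l).2, one_mul]

theorem abs_prodExpect_sub_update_le (hz : ∀ l, z l ∈ stdSimplex ℝ (κ l))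
    (hc : ∀ s l j, |c s - c (Function.update s l j)| ≤ δ) {l₀ : ι} {v : κ l₀ → ℝ}
    (hv : ∑ j, v j = 1) :
    |prodExpect z c - prodExpect (Function.update z l₀ v) c| ≤ δ * ∑ j, |z l₀ j - v j| := by
  have hz' : (fun l : {l // l ≠ l₀} => Function.update z l₀ v l) = fun l : {l // l ≠ l₀} => z l :=
    funext fun (l : {l // l ≠ l₀}) => Function.update_of_ne l.2 _ _
  rw [prodExpect_eq_sum_mul z c l₀, prodExpect_eq_sum_mul _ c l₀, hz', Function.update_self,
    ← sum_sub_distrib]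
  simp only [← sub_mul]
  refine abs_sum_mul_le_of_sum_eq_zero (by simp [sum_sub_distrib, (hz l₀).2, hv])
    fun j j' => ?_
  have hsplit (t : ∀ l : {l // l ≠ l₀}, κ l) : (Equiv.piSplitAt l₀ κ).symm (j', t) =
      Function.update ((Equiv.piSplitAt l₀ κ).symm (j, t)) l₀ j' := by
    ext l
    by_cases hl : l = l₀
    · subst hl; simp
    · simp [hl, Equiv.piSplitAt_symm_apply]
  simp only [prodExpect, ← sum_sub_distrib, ← mul_sub]
  exact abs_prodExpect_le (fun l => hz l) fun t => by rw [hsplit]; exact hc _ _ _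

theorem abs_prodExpect_sub_le {w : ∀ l, κ l → ℝ} (hz : ∀ l, z l ∈ stdSimplex ℝ (κ l))
    (hw : ∀ l, w l ∈ stdSimplex ℝ (κ l))
    (hc : ∀ s l j, |c s - c (Function.update s l j)| ≤ δ) :
    |prodExpect z c - prodExpect w c| ≤ δ * ∑ l, ∑ j, |z l j - w l j| := by
  let hybrid (A : Finset ι) (l : ι) : κ l → ℝ := if l ∈ A then w l else z l
  have hybrid_mem (A : Finset ι) (l : ι) : hybrid A l ∈ stdSimplex ℝ (κ l) := by
    unfold hybrid; split_ifs; exacts [hw l, hz l]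
  suffices ∀ A, |prodExpect z c - prodExpect (hybrid A) c| ≤ δ * ∑ l ∈ A, ∑ j, |z l j - w l j| by
    simpa [hybrid] using this univ
  intro A
  induction A using Finset.induction_on with
  | empty => simp [hybrid]
  | insert a A ha ih =>
    have hinsert : hybrid (insert a A) = Function.update (hybrid A) a (w a) := by
      ext l : 1
      by_cases hl : l = a
      · subst hl; simp [hybrid]
      · simp [hybrid, hl]
    have step := abs_prodExpect_sub_update_le (hybrid_mem A) hc (hw a).2
    rw [show hybrid A a = z a from if_neg ha] at step
    rw [hinsert, sum_insert ha, mul_add]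
    exact (abs_sub_le _ _ _).trans (by linarith)

end ProductExpectation

theorem exists_lt_forall_le_of_forall_lt {α : Type*} [Finite α] {f : α → ℝ} {b : ℝ}
    (h : ∀ i, b < f i) : ∃ m, b < m ∧ ∀ i, m ≤ f i := by
  cases isEmpty_or_nonempty α
  · exact ⟨b + 1, by linarith, isEmptyElim⟩
  · obtain ⟨i₀, hi₀⟩ := Finite.exists_min f
    exact ⟨f i₀, h i₀, hi₀⟩

section OtherPlayers

variable {α : Type*} [Fintype α] [DecidableEq α]

theorem sum_subtype_ne_eq_sub (f : α → ℝ) (k : α) :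
    ∑ l : {l // l ≠ k}, f l.1 = ∑ l, f l - f k := by
  rw [Fintype.sum_eq_add_sum_subtype_ne f k]; ring

theorem sum_sum_subtype_ne (f : α → ℝ) :
    ∑ k, ∑ l : {l // l ≠ k}, f l.1 = (Fintype.card α - 1) * ∑ l, f l := by
  simp only [sum_subtype_ne_eq_sub, sum_sub_distrib, sum_const, card_univ, nsmul_eq_mul]
  ring

theorem sum_sum_subtype_ne_mul_le (a : α → ℝ) :
    ∑ k, (∑ l : {l // l ≠ k}, a l.1) * a k ≤ (Fintype.card α - 1) * ∑ k, a k ^ 2 := by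
  have h : (∑ k, a k) ^ 2 ≤ Fintype.card α * ∑ k, a k ^ 2 := sq_sum_le_card_mul_sum_sq
  have e : ∑ k, (∑ l, a l - a k) * a k = (∑ k, a k) ^ 2 - ∑ k, a k ^ 2 := by
    simp only [sub_mul, sum_sub_distrib, ← mul_sum, sq]
  simp only [sum_subtype_ne_eq_sub, e]
  linarith

end OtherPlayers

section Game

variable {N : ℕ} {n : Fin N → ℕ}

theorem JointInterior.jointSimplex {x : Strat n} (hx : JointInterior x) : JointSimplex x :=
  fun k => ⟨fun i => ((hx k).1 i).le, (hx k).2⟩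

def RewardLipschitz (r : Strat n → Strat n) (L : ℝ) : Prop :=
  ∀ x y, JointSimplex x → JointSimplex y → ∀ k i,
    |r x k i - r y k i| ≤ L * ∑ l : {l : Fin N // l ≠ k}, ∑ j, |x l.1 j - y l.1 j|

variable {rPure : ∀ k : Fin N, Fin (n k) → (∀ l : {l : Fin N // l ≠ k}, Fin (n l.1)) → ℝ} {δ : ℝ}

theorem rewardLipschitz_mixedReward
    (hδ : ∀ (k : Fin N) (i : Fin (n k)) (s s' : ∀ l : {l : Fin N // l ≠ k}, Fin (n l.1)),
      (∃ l, ∀ m, m ≠ l → s m = s' m) → |rPure k i s - rPure k i s'| ≤ δ) :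
    RewardLipschitz (mixedReward rPure) δ := fun _ _ hx hy k i =>
  abs_prodExpect_sub_le (fun l => hx l) (fun l => hy l) fun s l _ =>
    hδ k i s _ ⟨l, fun _ hm => (Function.update_of_ne hm _ _).symm⟩

theorem exists_rewardLipschitz_mixedReward (hn : ∀ k, 0 < n k)
    (hδ : ∀ (k : Fin N) (i : Fin (n k)) (s s' : ∀ l : {l : Fin N // l ≠ k}, Fin (n l.1)),
      (∃ l, ∀ m, m ≠ l → s m = s' m) → |rPure k i s - rPure k i s'| ≤ δ)
    {T : Fin N → ℝ} (hT0 : ∀ k, 0 < T k) (hT : ∀ k, δ * ((N : ℝ) - 1) < T k) :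
    ∃ L, 0 ≤ L ∧ RewardLipschitz (mixedReward rPure) L ∧ ∀ k, L * ((N : ℝ) - 1) < T k := by
  refine ⟨max δ 0, le_max_right _ _, rewardLipschitz_mixedReward fun k i s s' h =>
    (hδ k i s s' h).trans (le_max_left _ _), fun k => ?_⟩
  rcases lt_or_ge 1 N with hN | hN
  · -- comparing a pure profile with itself shows `0 ≤ δ` once there are two players
    have hδ0 : 0 ≤ δ := by
      simpa using hδ ⟨0, by omega⟩ ⟨0, hn _⟩ (fun m => ⟨0, hn m⟩) (fun m => ⟨0, hn m⟩)
        ⟨⟨⟨1, hN⟩, by simp⟩, fun _ _ => rfl⟩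
    rw [max_eq_left hδ0]
    exact hT k
  · have : (N : ℝ) - 1 ≤ 0 := by rw [sub_nonpos]; exact_mod_cast hN
    nlinarith [le_max_right δ 0, hT0 k]

end Game

section QRE

variable {N : ℕ} {n : Fin N → ℕ} {r : Strat n → Strat n} {T : Fin N → ℝ} {L : ℝ}

def qreMap (r : Strat n → Strat n) (T : Fin N → ℝ) (x : Strat n) : Strat n :=
  fun k => softmax fun i => r x k i / T k

theorem isQRE_iff {x : Strat n} : IsQRE r T x ↔ JointSimplex x ∧ qreMap r T x = x := by
  simp only [IsQRE, qreMap, softmax, funext_iff, eq_comm]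

theorem jointSimplex_qreMap (hn : ∀ k, 0 < n k) (x : Strat n) : JointSimplex (qreMap r T x) :=
  fun k =>
    have : Nonempty (Fin (n k)) := ⟨⟨0, hn k⟩⟩
    ⟨fun i => (softmax_pos _ i).le, sum_softmax _⟩

theorem sum_abs_qreMap_sub_le (hr : RewardLipschitz r L) (hL : 0 ≤ L) {Tm : ℝ} (hTm : 0 < Tm)
    (hT : ∀ k, Tm ≤ T k) {x y : Strat n} (hx : JointSimplex x) (hy : JointSimplex y) :
    ∑ k, ∑ i, |qreMap r T x k i - qreMap r T y k i| ≤
      L * ((N : ℝ) - 1) / Tm * ∑ k, ∑ i, |x k i - y k i| := by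
  set S := fun k => ∑ l : {l : Fin N // l ≠ k}, ∑ j, |x l.1 j - y l.1 j|
  have hk (k : Fin N) : ∑ i, |qreMap r T x k i - qreMap r T y k i| ≤ L / Tm * S k := by
    have hS : 0 ≤ S k := sum_nonneg fun _ _ => sum_nonneg fun _ _ => abs_nonneg _
    cases isEmpty_or_nonempty (Fin (n k))
    · simpa using mul_nonneg (div_nonneg hL hTm.le) hS
    refine sum_abs_softmax_sub_le _ fun i => ?_
    have hTk : 0 < T k := hTm.trans_le (hT k)
    rw [← sub_div, abs_div, abs_of_pos hTk, div_le_iff₀ hTk]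
    calc |r x k i - r y k i| ≤ L * S k := hr x y hx hy k i
      _ ≤ L / Tm * S k * T k := by
        rw [div_mul_eq_mul_div, div_mul_eq_mul_div, le_div_iff₀ hTm]
        exact mul_le_mul_of_nonneg_left (hT k) (mul_nonneg hL hS)
  calc ∑ k, ∑ i, |qreMap r T x k i - qreMap r T y k i|
      ≤ ∑ k, L / Tm * S k := sum_le_sum fun k _ => hk k
    _ = _ := by
      rw [← mul_sum, sum_sum_subtype_ne (fun l => ∑ j, |x l j - y l j|), Fintype.card_fin]
      ring

end QRE

section Banach

variable {N : ℕ} {n : Fin N → ℕ} {r : Strat n → Strat n} {T : Fin N → ℝ} {L : ℝ}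

/-- `Strat n` with the ℓ¹ distance, in which `qreMap` is a contraction. -/
abbrev StratL1 (n : Fin N → ℕ) := PiLp 1 fun k => PiLp 1 fun _ : Fin (n k) => ℝ

def toL1 (x : Strat n) : StratL1 n := WithLp.toLp 1 fun k => WithLp.toLp 1 (x k)

def ofL1 (z : StratL1 n) : Strat n := fun k i => z k i

theorem dist_toL1 (x y : Strat n) : dist (toL1 x) (toL1 y) = ∑ k, ∑ i, |x k i - y k i| := by
  simp [PiLp.dist_eq_of_L1, toL1, Real.dist_eq]

theorem existsUnique_isQRE (hn : ∀ k, 0 < n k) (hr : RewardLipschitz r L) (hL : 0 ≤ L)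
    (hT0 : ∀ k, 0 < T k) (hT : ∀ k, L * ((N : ℝ) - 1) < T k) : ∃! x, IsQRE r T x := by
  obtain ⟨Tm, hTm, hTmT⟩ := exists_lt_forall_le_of_forall_lt fun k => max_lt (hT k) (hT0 k)
  have hTm0 : 0 < Tm := (le_max_right _ _).trans_lt hTm
  set q := L * ((N : ℝ) - 1) / Tm
  have hq : q < 1 := (div_lt_one hTm0).2 ((le_max_left _ _).trans_lt hTm)
  have hcontr {x y : Strat n} (hx : JointSimplex x) (hy : JointSimplex y) :
      dist (toL1 (qreMap r T x)) (toL1 (qreMap r T y)) ≤ q * dist (toL1 x) (toL1 y) := by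
    simpa only [dist_toL1] using sum_abs_qreMap_sub_le hr hL hTm0 hTmT hx hy
  let s : Set (StratL1 n) := {z | JointSimplex (ofL1 z)}
  let f (z : StratL1 n) : StratL1 n := toL1 (qreMap r T (ofL1 z))
  have hsc : IsComplete s := by
    simp only [s, JointSimplex, Set.ofPred_forall]
    refine (isClosed_iInter fun k => (isClosed_stdSimplex ℝ _).preimage ?_).isComplete
    unfold ofL1; fun_prop
  have hsf : Set.MapsTo f s s := fun z _ => jointSimplex_qreMap hn _
  have hf : ContractingWith q.toNNReal (hsf.restrict f s s) := by
    refine ⟨by simpa using hq, LipschitzWith.of_dist_le_mul fun z w => ?_⟩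
    exact (hcontr z.2 w.2).trans (mul_le_mul_of_nonneg_right (Real.le_coe_toNNReal q) dist_nonneg)
  obtain ⟨z, hzs, hz, -⟩ := hf.exists_fixedPoint' hsc hsf (x := toL1 (qreMap r T 0))
    (jointSimplex_qreMap hn 0) (edist_ne_top _ _)
  set x := ofL1 z
  have hx : IsQRE r T x := isQRE_iff.2 ⟨hzs, congrArg ofL1 hz⟩
  refine ⟨x, hx, fun y hy => ?_⟩
  obtain ⟨hyΔ, hyx⟩ := isQRE_iff.1 hy
  obtain ⟨hxΔ, hxx⟩ := isQRE_iff.1 hx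
  have hd := hcontr hyΔ hxΔ
  rw [hyx, hxx] at hd
  have h0 : dist (toL1 y) (toL1 x) = 0 := by nlinarith [dist_nonneg (x := toL1 y) (y := toL1 x)]
  exact congrArg ofL1 (dist_eq_zero.1 h0)

end Banach

theorem le_mul_exp_of_hasDerivAt_le {f f' : ℝ → ℝ} {K : ℝ} (hf : ∀ t, HasDerivAt f (f' t) t)
    (hK : ∀ t, f' t ≤ K * f t) {t : ℝ} (ht : 0 ≤ t) : f t ≤ f 0 * exp (K * t) := by
  have := le_gronwallBound_of_liminf_deriv_right_le (ε := 0) (a := 0)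
    (fun s _ => (hf s).continuousAt.continuousWithinAt)
    (fun s _ _ hr => (hf s).hasDerivWithinAt.liminf_right_slope_le hr) le_rfl
    (fun s _ => by simpa using hK s) t ⟨ht, le_rfl⟩
  rwa [gronwallBound_ε0, sub_zero] at this

theorem sum_mul_growthRate_eq {ι : Type*} [Fintype ι] {p x g g' : ι → ℝ} {τ C : ℝ}
    (hp : ∑ i, p i = 1) (hx : ∑ i, x i = 1) (hC : ∀ i, g' i - τ * log (p i) = C) :
    ∑ i, p i * (g i - ∑ j, x j * g j - τ * (log (x i) - ∑ j, x j * log (x j))) =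
      ∑ i, (p i - x i) * (g i - g' i) + τ * ∑ i, (p i - x i) * (log (p i) - log (x i)) := by
  have hg' (i : ι) : g' i = C + τ * log (p i) := by linarith [hC i]
  simp only [hg', mul_sub, sub_mul, mul_add, sum_sub_distrib, sum_add_distrib, ← sum_mul, hp, hx]
  simp only [mul_left_comm _ τ, ← mul_sum]
  ring

section Convergence

variable {N : ℕ} {n : Fin N → ℕ} {r : Strat n → Strat n} {T : Fin N → ℝ} {L : ℝ}
  {p : Strat n}

def qlGrowthRate (r : Strat n → Strat n) (T : Fin N → ℝ) (x : Strat n) (k : Fin N)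
    (i : Fin (n k)) : ℝ :=
  r x k i - ∑ j, x k j * r x k j - T k * (log (x k i) - ∑ j, x k j * log (x k j))

theorem IsQRE.pos (hp : IsQRE r T p) (k : Fin N) (i : Fin (n k)) : 0 < p k i := by
  have : Nonempty (Fin (n k)) := ⟨i⟩
  rw [← (isQRE_iff.1 hp).2]
  exact softmax_pos _ i

theorem IsQRE.sub_mul_log_eq (hp : IsQRE r T p) (hT : ∀ k, 0 < T k) (k : Fin N) (i : Fin (n k)) :
    r p k i - T k * log (p k i) = T k * log (∑ j, exp (r p k j / T k)) := by
  have : Nonempty (Fin (n k)) := ⟨i⟩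
  have hpk : p k i = softmax (fun j => r p k j / T k) i :=
    congrFun (congrFun (isQRE_iff.1 hp).2 k).symm i
  rw [hpk, log_softmax, mul_sub, mul_div_cancel₀ _ (hT k).ne', sub_sub_cancel]

theorem IsQRE.sum_mul_qlGrowthRate_eq (hp : IsQRE r T p) (hT : ∀ k, 0 < T k) {x : Strat n}
    (hx : JointInterior x) (k : Fin N) :
    ∑ i, p k i * qlGrowthRate r T x k i =
      ∑ i, (p k i - x k i) * (r x k i - r p k i) +
        T k * ∑ i, (p k i - x k i) * (log (p k i) - log (x k i)) :=
  sum_mul_growthRate_eq (hp.1 k).2 (hx k).2 (hp.sub_mul_log_eq hT k)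

theorem RewardLipschitz.abs_sum_sub_mul_sub_le (hr : RewardLipschitz r L) {x y : Strat n}
    (hx : JointSimplex x) (hy : JointSimplex y) (k : Fin N) :
    |∑ i, (x k i - y k i) * (r y k i - r x k i)| ≤
      L * (∑ l : {l : Fin N // l ≠ k}, ∑ j, |x l.1 j - y l.1 j|) * ∑ i, |x k i - y k i| := by
  rw [mul_sum]
  refine (abs_sum_le_sum_abs _ _).trans (sum_le_sum fun i _ => ?_)
  rw [abs_mul, abs_sub_comm (r y k i), mul_comm]
  exact mul_le_mul_of_nonneg_right (hr x y hx hy k i) (abs_nonneg _)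

theorem IsQRE.mul_sum_relEntropy_le (hp : IsQRE r T p) (hr : RewardLipschitz r L) (hL : 0 ≤ L)
    (hT : ∀ k, 0 < T k) {c : ℝ} (hc0 : 0 ≤ c) (hc : ∀ k, c ≤ T k - L * ((N : ℝ) - 1))
    {x : Strat n} (hx : JointInterior x) :
    c * ∑ k, relEntropy (p k) (x k) ≤ ∑ k, ∑ i, p k i * qlGrowthRate r T x k i := by
  set a := fun k => ∑ i, |p k i - x k i|
  set σ := fun k => ∑ i, (p k i - x k i) * (log (p k i) - log (x k i))
  have hσ (k : Fin N) : a k ^ 2 ≤ σ k :=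
    sq_sum_abs_sub_le_sum_sub_mul_log_sub (hp.pos k) (hx k).1 (hp.1 k).2 (hx k).2
  have hN (k : Fin N) : 0 ≤ (N : ℝ) - 1 := by
    rw [sub_nonneg]; exact_mod_cast k.pos
  have hcross (k : Fin N) := abs_le.1 (hr.abs_sum_sub_mul_sub_le hp.1 hx.jointSimplex k)
  calc c * ∑ k, relEntropy (p k) (x k)
      ≤ ∑ k, (T k - L * ((N : ℝ) - 1)) * σ k := by
        rw [mul_sum]
        refine sum_le_sum fun k _ => mul_le_mul (hc k) ?_ ?_ ?_
        · exact relEntropy_le_sum_sub_mul_log_sub (hp.pos k) (hx k).1 (hp.1 k).2 (hx k).2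
        · exact relEntropy_nonneg (hp.pos k) (hx k).1 (hp.1 k).2 (hx k).2
        · linarith [hc k]
    _ ≤ ∑ k, T k * σ k - L * ∑ k, ((N : ℝ) - 1) * a k ^ 2 := by
        rw [mul_sum, ← sum_sub_distrib]
        refine sum_le_sum fun k _ => ?_
        nlinarith [mul_le_mul_of_nonneg_left (hσ k) (mul_nonneg hL (hN k))]
    _ ≤ ∑ k, T k * σ k - L * ∑ k, (∑ l : {l : Fin N // l ≠ k}, a l.1) * a k := by
        rw [← mul_sum]
        have := sum_sum_subtype_ne_mul_le a
        rw [Fintype.card_fin] at this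
        nlinarith
    _ ≤ ∑ k, ∑ i, p k i * qlGrowthRate r T x k i := by
        rw [mul_sum, ← sum_sub_distrib]
        refine sum_le_sum fun k _ => ?_
        rw [hp.sum_mul_qlGrowthRate_eq hT hx k]
        linarith [(hcross k).1]

theorem QLSolution.hasDerivAt_relEntropy {x : ℝ → Strat n} (hx : QLSolution r T x)
    (p : Strat n) (t : ℝ) :
    HasDerivAt (fun t => ∑ k, relEntropy (p k) (x t k))
      (-∑ k, ∑ i, p k i * qlGrowthRate r T (x t) k i) t := by
  simp only [relEntropy, ← sum_neg_distrib]
  refine HasDerivAt.fun_sum fun k _ => HasDerivAt.fun_sum fun i _ => ?_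
  have hxi : x t k i ≠ 0 := ((hx.1 t k).1 i).ne'
  have hlog : HasDerivAt (fun s => log (x s k i)) (qlGrowthRate r T (x t) k i) t := by
    have := (hx.2 t k i).log hxi
    rwa [mul_div_cancel_left₀ _ hxi] at this
  simpa using (hlog.const_sub (log (p k i))).const_mul (p k i)

theorem QLSolution.tendsto_of_isQRE {x : ℝ → Strat n} (hx : QLSolution r T x)
    (hp : IsQRE r T p) (hr : RewardLipschitz r L) (hL : 0 ≤ L) (hT0 : ∀ k, 0 < T k)
    (hT : ∀ k, L * ((N : ℝ) - 1) < T k) : Tendsto x atTop (𝓝 p) := by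
  obtain ⟨Tm, hTm, hTmT⟩ := exists_lt_forall_le_of_forall_lt hT
  set V := fun t => ∑ k, relEntropy (p k) (x t k)
  have hV0 (t : ℝ) : 0 ≤ V t := sum_nonneg fun k _ =>
    relEntropy_nonneg (hp.pos k) (hx.1 t k).1 (hp.1 k).2 (hx.1 t k).2
  have hVexp (t : ℝ) (ht : 0 ≤ t) : V t ≤ V 0 * exp (-(Tm - L * ((N : ℝ) - 1)) * t) := by
    refine le_mul_exp_of_hasDerivAt_le (hx.hasDerivAt_relEntropy p) (fun s => ?_) ht
    have := hp.mul_sum_relEntropy_le hr hL hT0 (sub_pos.2 hTm).le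
      (fun k => sub_le_sub_right (hTmT k) _) (hx.1 s)
    linarith
  have hV : Tendsto V atTop (𝓝 0) := by
    refine squeeze_zero' (Eventually.of_forall hV0) (eventually_atTop.2 ⟨0, hVexp⟩) ?_
    simpa using (tendsto_exp_atBot.comp
      (tendsto_id.const_mul_atTop_of_neg (neg_lt_zero.2 (sub_pos.2 hTm)))).const_mul (V 0)
  have hcoord (t : ℝ) (k : Fin N) (i : Fin (n k)) : (x t k i - p k i) ^ 2 ≤ 2 * V t := by
    have h1 := sum_sq_sub_div_two_le_relEntropy (hp.pos k) (hx.1 t k).1 (hp.1 k).2 (hx.1 t k).2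
    have h2 : (x t k i - p k i) ^ 2 / 2 ≤ ∑ i, (x t k i - p k i) ^ 2 / 2 :=
      single_le_sum (f := fun j => (x t k j - p k j) ^ 2 / 2) (fun j _ => by positivity)
        (mem_univ i)
    have h3 : relEntropy (p k) (x t k) ≤ V t :=
      single_le_sum (f := fun k => relEntropy (p k) (x t k))
        (fun l _ => relEntropy_nonneg (hp.pos l) (hx.1 t l).1 (hp.1 l).2 (hx.1 t l).2) (mem_univ k)
    linarith
  refine tendsto_pi_nhds.2 fun k => tendsto_pi_nhds.2 fun i => ?_
  rw [tendsto_iff_norm_sub_tendsto_zero]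
  refine squeeze_zero (fun t => norm_nonneg _) (fun t => abs_le_sqrt (hcoord t k i)) ?_
  simpa using (hV.const_mul 2).sqrt

end Convergence

theorem Q_learning_converges_to_unique_QRE_of_sufficient_exploration
    {N : ℕ} {n : Fin N → ℕ} (hn : ∀ k, 0 < n k)
    (rPure : ∀ k : Fin N, Fin (n k) → (∀ l : {l : Fin N // l ≠ k}, Fin (n l.1)) → ℝ)
    (δ : ℝ)
    -- δ is the influence bound: it bounds the change in reward caused by a
    -- deviation of a single opponent
    (hδ : ∀ (k : Fin N) (i : Fin (n k)) (s s' : ∀ l : {l : Fin N // l ≠ k}, Fin (n l.1)),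
      (∃ l, ∀ m, m ≠ l → s m = s' m) → |rPure k i s - rPure k i s'| ≤ δ)
    (T : Fin N → ℝ) (hT0 : ∀ k, 0 < T k)
    (hT : ∀ k, δ * ((N : ℝ) - 1) < T k) :
    ∃ xbar : Strat n, IsQRE (mixedReward rPure) T xbar ∧
      (∀ y, IsQRE (mixedReward rPure) T y → y = xbar) ∧
      ∀ x : ℝ → Strat n, QLSolution (mixedReward rPure) T x →
        Tendsto x atTop (𝓝 xbar) := by
  obtain ⟨L, hL, hr, hTL⟩ := exists_rewardLipschitz_mixedReward hn hδ hT0 hT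
  obtain ⟨xbar, hxbar, huniq⟩ := existsUnique_isQRE hn hr hL hT0 hTL
  exact ⟨xbar, hxbar, huniq, fun x hx => hx.tendsto_of_isQRE hxbar hr hL hT0 hTL⟩
end
end

section
/- Consider a network polymatrix game Γ with payoffs u_k(x) = Σ_{(k,l)∈ℰ} ⟨x_k, A^{kl} x_l⟩, and let x : [0,∞) → Δ be a measurable trajectory of a learning dynamic. Suppose (i) the dynamic is no-regret, i.e. lim_{t→∞} (1/t) Σ_k R_k(t) = 0 where R_k(t) = max_{x'_k ∈ Δ_k} ∫_0^t [u_k(x'_k, x_{-k}(s)) − u_k(x_k(s), x_{-k}(s))] ds, and (ii) the time-averaged strategy μ(t) = (1/t)∫_0^t x(s) ds converges to an equilibrium x̄ as t → ∞. Then the Time Averaged Social Welfare satisfies lim_{t→∞} (1/t) ∫_0^t SW(x(s)) ds ≥ SW(x̄), where SW(x) = Σ_k u_k(x). -/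
/-
STATEMENT 6: Consider a network polymatrix game Γ and a measurable trajectory
x : [0,∞) → Δ of a learning dynamic. Suppose (i) the dynamic is no-regret and
(ii) the time-averaged strategy μ(t) converges to an equilibrium x̄. Then the
Time Averaged Social Welfare satisfies lim_{t→∞} (1/t)∫_0^t SW(x(s)) ds ≥ SW(x̄).
-/

open Filter Topology

noncomputable section

/-- Reward vector of player `k`: `r_k(x) = Σ_{(k,l)∈E} A^{kl} x_l`. -/
def polyReward {N : ℕ} {n : Fin N → ℕ} (E : Finset (Fin N × Fin N))
    (A : ∀ k l, Matrix (Fin (n k)) (Fin (n l)) ℝ) : Strat n → Strat n :=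
  fun x k i => ∑ l ∈ Finset.univ.filter (fun l => (k, l) ∈ E), ∑ j, A k l i j * x l j

/-- Payoff of player `k`: `u_k(x) = Σ_{(k,l)∈E} ⟨x_k, A^{kl} x_l⟩`. -/
def polyPayoff {N : ℕ} {n : Fin N → ℕ} (E : Finset (Fin N × Fin N))
    (A : ∀ k l, Matrix (Fin (n k)) (Fin (n l)) ℝ) (k : Fin N) (x : Strat n) : ℝ :=
  ∑ i, x k i * polyReward E A x k i

/-- Social Welfare `SW(x) = Σ_k u_k(x)`. -/
def SW {N : ℕ} {n : Fin N → ℕ} (E : Finset (Fin N × Fin N))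
    (A : ∀ k l, Matrix (Fin (n k)) (Fin (n l)) ℝ) (x : Strat n) : ℝ :=
  ∑ k, polyPayoff E A k x

/-- Regret of player `k` at time `t` along the trajectory `x`:
`R_k(t) = max_{x'_k ∈ Δ_k} ∫_0^t [u_k(x'_k, x_{-k}(s)) − u_k(x(s))] ds`. -/
def regret {N : ℕ} {n : Fin N → ℕ} (E : Finset (Fin N × Fin N))
    (A : ∀ k l, Matrix (Fin (n k)) (Fin (n l)) ℝ) (x : ℝ → Strat n) (k : Fin N)
    (t : ℝ) : ℝ :=
  sSup ((fun xk' => ∫ s in (0:ℝ)..t,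
      (polyPayoff E A k (Function.update (x s) k xk') - polyPayoff E A k (x s))) ''
    stdSimplex ℝ (Fin (n k)))

/-
Use the limit strategy x̄_k as the deviation of player k in the regret. Payoffs are
multilinear, so the deviation payoff y ↦ u_k(x̄_k, y_{-k}) is affine in y (the self-interaction
term ⟨x̄_k, A^{kk} x̄_k⟩ is a constant); hence its time average along the trajectory is its
value at the time-averaged strategy μ(t), which tends to u_k(x̄). The regret R_k(t) bounds
from above how much this average exceeds the time-averaged payoff of player k, so summing
over players,
  (1/t) ∫_0^t SW(x(s)) ds ≥ Σ_k u_k(x̄_k, μ_{-k}(t)) − (1/t) Σ_k R_k(t) → SW(x̄).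
-/

open MeasureTheory

section TimeAverage

variable {E F : Type*} [NormedAddCommGroup E] [NormedAddCommGroup F]

def timeAvg [NormedSpace ℝ E] (g : ℝ → E) (t : ℝ) : E := t⁻¹ • ∫ s in (0:ℝ)..t, g s

theorem AffineMap.timeAvg_comp [NormedSpace ℝ E] [FiniteDimensional ℝ E] [NormedSpace ℝ F]
    [CompleteSpace F] (f : E →ᵃ[ℝ] F) {g : ℝ → E} {t : ℝ} (ht : t ≠ 0)
    (hg : IntervalIntegrable g volume 0 t) :
    timeAvg (fun s => f (g s)) t = f (timeAvg g t) := by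
  have := FiniteDimensional.complete ℝ E
  let L : E →L[ℝ] F := ⟨f.linear, f.linear.continuous_of_finiteDimensional⟩
  have hf : ∀ y, f y = L y + f 0 := fun y => congrFun f.decomp y
  have hLg : IntervalIntegrable (fun s => L (g s)) volume 0 t :=
    ⟨L.integrable_comp hg.1, L.integrable_comp hg.2⟩
  rw [hf (timeAvg g t)]
  simp only [timeAvg]
  rw [funext fun s => hf (g s), intervalIntegral.integral_add hLg intervalIntegrable_const,
    L.intervalIntegral_comp_comm hg, intervalIntegral.integral_const, sub_zero, smul_add,
    smul_smul, inv_mul_cancel₀ ht, one_smul, L.map_smul]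

theorem intervalIntegrable_comp_of_mapsTo_isCompact {g : ℝ → E} {φ : E → F} {K : Set E}
    (hK : IsCompact K) (hφ : Continuous φ) (hg : AEStronglyMeasurable g)
    (hgK : ∀ s, 0 ≤ s → g s ∈ K) {t : ℝ} (ht : 0 ≤ t) :
    IntervalIntegrable (fun s => φ (g s)) volume 0 t := by
  obtain ⟨C, hC⟩ := hK.exists_bound_of_continuousOn hφ.continuousOn
  refine (intervalIntegrable_const (c := C)).mono_fun'
    (hφ.comp_aestronglyMeasurable hg).restrict ?_
  filter_upwards [ae_restrict_mem measurableSet_uIoc] with s hs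
  rw [Set.uIoc_of_le ht] at hs
  exact hC _ (hgK s hs.1.le)

theorem abs_intervalIntegral_le_mul {g : ℝ → ℝ} {C t : ℝ} (ht : 0 ≤ t)
    (hg : ∀ s, 0 ≤ s → |g s| ≤ C) :
    |∫ s in (0:ℝ)..t, g s| ≤ C * t := by
  have h := intervalIntegral.norm_integral_le_of_norm_le_const (a := 0) (b := t) (C := C)
    (f := g) fun s hs => by
      rw [Set.uIoc_of_le ht] at hs
      exact hg s hs.1.le
  rwa [sub_zero, abs_of_nonneg ht] at h

end TimeAverage

def Function.updateAffineMap {R ι : Type*} [Ring R] [DecidableEq ι] {φ : ι → Type*}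
    [∀ i, AddCommGroup (φ i)] [∀ i, Module R (φ i)] (i : ι) (b : φ i) :
    (∀ j, φ j) →ᵃ[R] ∀ j, φ j where
  toFun y := Function.update y i b
  linear := LinearMap.id - (LinearMap.single R φ i).comp (LinearMap.proj i)
  map_vadd' y v := by
    ext j
    by_cases h : j = i
    · subst h; simp
    · simp [h]

section Game

variable {N : ℕ} {n : Fin N → ℕ} (E : Finset (Fin N × Fin N))
  (A : ∀ k l, Matrix (Fin (n k)) (Fin (n l)) ℝ)

theorem isCompact_setOf_jointSimplex : IsCompact {y : Strat n | JointSimplex y} := by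
  simpa [JointSimplex, Set.pi] using isCompact_univ_pi fun k => isCompact_stdSimplex ℝ (Fin (n k))

theorem JointSimplex.update {y : Strat n} (hy : JointSimplex y) {k : Fin N}
    {z : Fin (n k) → ℝ} (hz : z ∈ stdSimplex ℝ (Fin (n k))) :
    JointSimplex (Function.update y k z) := by
  intro l
  by_cases h : l = k
  · subst h; simpa using hz
  · simpa [h] using hy l

theorem continuous_polyPayoff (k : Fin N) : Continuous (polyPayoff E A k : Strat n → ℝ) := by
  unfold polyPayoff polyReward
  fun_prop

theorem continuous_SW : Continuous (SW E A : Strat n → ℝ) :=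
  continuous_finsetSum _ fun k _ => continuous_polyPayoff E A k

def payoffAgainst (k : Fin N) (z : Fin (n k) → ℝ) : Strat n →ₗ[ℝ] ℝ where
  toFun y := ∑ i, z i * polyReward E A y k i
  map_add' y y' := by
    simp only [polyReward, Pi.add_apply, mul_add, Finset.sum_add_distrib]
  map_smul' c y := by
    simp only [polyReward, Pi.smul_apply, smul_eq_mul, Finset.mul_sum, RingHom.id_apply,
      mul_left_comm c]

def deviationPayoff (k : Fin N) (z : Fin (n k) → ℝ) : Strat n →ᵃ[ℝ] ℝ :=
  (payoffAgainst E A k z).toAffineMap.comp (Function.updateAffineMap k z)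

theorem deviationPayoff_apply (k : Fin N) (z : Fin (n k) → ℝ) (y : Strat n) :
    deviationPayoff E A k z y = polyPayoff E A k (Function.update y k z) := by
  change ∑ i, z i * polyReward E A (Function.update y k z) k i = _
  rw [polyPayoff, Function.update_self]

theorem deviationPayoff_self (k : Fin N) (y : Strat n) :
    deviationPayoff E A k (y k) y = polyPayoff E A k y := by
  rw [deviationPayoff_apply, Function.update_eq_self]

end Game

section Trajectory

variable {N : ℕ} {n : Fin N → ℕ} (E : Finset (Fin N × Fin N))
  (A : ∀ k l, Matrix (Fin (n k)) (Fin (n l)) ℝ) {x : ℝ → Strat n}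

theorem timeAvg_apply_apply {t : ℝ} (hx : IntervalIntegrable x volume 0 t) (k : Fin N)
    (i : Fin (n k)) :
    timeAvg x t k i = (1 / t) * ∫ s in (0:ℝ)..t, x s k i := by
  let P : Strat n →L[ℝ] ℝ :=
    (ContinuousLinearMap.proj (R := ℝ) (φ := fun _ : Fin (n k) => ℝ) i).comp
      (ContinuousLinearMap.proj (R := ℝ) (φ := fun l => Fin (n l) → ℝ) k)
  have h : ∫ s in (0:ℝ)..t, x s k i = (∫ s in (0:ℝ)..t, x s) k i :=
    P.intervalIntegral_comp_comm hx
  rw [one_div, h]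
  rfl

theorem Continuous.intervalIntegrable_comp_of_jointSimplex {F : Type*} [NormedAddCommGroup F]
    {φ : Strat n → F} (hφ : Continuous φ) (hxm : Measurable x)
    (hxΔ : ∀ s, 0 ≤ s → JointSimplex (x s)) {t : ℝ} (ht : 0 ≤ t) :
    IntervalIntegrable (fun s => φ (x s)) volume 0 t :=
  intervalIntegrable_comp_of_mapsTo_isCompact isCompact_setOf_jointSimplex hφ
    hxm.aestronglyMeasurable hxΔ ht

theorem intervalIntegral_deviation_sub_le_regret (hxΔ : ∀ s, 0 ≤ s → JointSimplex (x s))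
    (k : Fin N) {z : Fin (n k) → ℝ} (hz : z ∈ stdSimplex ℝ (Fin (n k))) {t : ℝ}
    (ht : 0 ≤ t) :
    ∫ s in (0:ℝ)..t, (polyPayoff E A k (Function.update (x s) k z) - polyPayoff E A k (x s))
      ≤ regret E A x k t := by
  -- `regret` is an `sSup`, so the deviation gains must be bounded above: Δ is compact.
  obtain ⟨C, hC⟩ := isCompact_setOf_jointSimplex.exists_bound_of_continuousOn
    (continuous_polyPayoff E A k).continuousOn
  refine le_csSup ⟨(C + C) * t, ?_⟩ ⟨z, hz, rfl⟩
  rintro _ ⟨z', hz', rfl⟩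
  refine (le_abs_self _).trans (abs_intervalIntegral_le_mul ht fun s hs => ?_)
  exact (abs_sub _ _).trans (add_le_add (hC _ ((hxΔ s hs).update hz')) (hC _ (hxΔ s hs)))

theorem deviationPayoff_timeAvg_sub_le (hxm : Measurable x)
    (hxΔ : ∀ s, 0 ≤ s → JointSimplex (x s)) (k : Fin N) {z : Fin (n k) → ℝ}
    (hz : z ∈ stdSimplex ℝ (Fin (n k))) {t : ℝ} (ht : 0 < t) :
    deviationPayoff E A k z (timeAvg x t) - t⁻¹ * regret E A x k t
      ≤ t⁻¹ * ∫ s in (0:ℝ)..t, polyPayoff E A k (x s) := by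
  have hx : IntervalIntegrable x volume 0 t :=
    continuous_id.intervalIntegrable_comp_of_jointSimplex hxm hxΔ ht.le
  have hdev : IntervalIntegrable (fun s => polyPayoff E A k (Function.update (x s) k z))
      volume 0 t :=
    ((continuous_polyPayoff E A k).comp (continuous_id.update k continuous_const)
      ).intervalIntegrable_comp_of_jointSimplex hxm hxΔ ht.le
  have hpay := (continuous_polyPayoff E A k).intervalIntegrable_comp_of_jointSimplex hxm hxΔ ht.le
  have hreg := intervalIntegral_deviation_sub_le_regret E A hxΔ k hz ht.le
  rw [intervalIntegral.integral_sub hdev hpay] at hreg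
  rw [← AffineMap.timeAvg_comp _ ht.ne' hx, timeAvg, smul_eq_mul, ← mul_sub]
  simp only [deviationPayoff_apply]
  exact mul_le_mul_of_nonneg_left (by linarith) (inv_nonneg.2 ht.le)

theorem sum_deviationPayoff_timeAvg_sub_le (hxm : Measurable x)
    (hxΔ : ∀ s, 0 ≤ s → JointSimplex (x s)) {z : Strat n} (hz : JointSimplex z) {t : ℝ}
    (ht : 0 < t) :
    ∑ k, deviationPayoff E A k (z k) (timeAvg x t) - (1 / t) * ∑ k, regret E A x k t
      ≤ (1 / t) * ∫ s in (0:ℝ)..t, SW E A (x s) := by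
  have hSW : ∫ s in (0:ℝ)..t, SW E A (x s)
      = ∑ k, ∫ s in (0:ℝ)..t, polyPayoff E A k (x s) :=
    intervalIntegral.integral_finsetSum fun k _ =>
      (continuous_polyPayoff E A k).intervalIntegrable_comp_of_jointSimplex hxm hxΔ ht.le
  rw [one_div, hSW, Finset.mul_sum, Finset.mul_sum, ← Finset.sum_sub_distrib]
  exact Finset.sum_le_sum fun k _ => deviationPayoff_timeAvg_sub_le E A hxm hxΔ k (hz k) ht

theorem isCoboundedUnder_ge_timeAvg_SW (hxΔ : ∀ s, 0 ≤ s → JointSimplex (x s)) :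
    IsCoboundedUnder (· ≥ ·) atTop fun t => (1 / t) * ∫ s in (0:ℝ)..t, SW E A (x s) := by
  obtain ⟨C, hC⟩ := isCompact_setOf_jointSimplex.exists_bound_of_continuousOn
    (continuous_SW E A).continuousOn
  refine isCoboundedUnder_ge_of_eventually_le atTop (x := C) ?_
  filter_upwards [eventually_gt_atTop 0] with t ht
  have h := abs_intervalIntegral_le_mul ht.le fun s hs => hC _ (hxΔ s hs)
  rw [one_div, inv_mul_le_iff₀ ht]
  linarith [le_abs_self (∫ s in (0:ℝ)..t, SW E A (x s))]

end Trajectory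

theorem no_regret_learning_outperforms_equilibrium_welfare_general
    {N : ℕ} {n : Fin N → ℕ}
    (E : Finset (Fin N × Fin N))
    (A : ∀ k l, Matrix (Fin (n k)) (Fin (n l)) ℝ)
    -- a measurable trajectory in Δ
    (x : ℝ → Strat n) (hxmeas : ∀ k i, Measurable fun s => x s k i)
    (hxΔ : ∀ s : ℝ, 0 ≤ s → JointSimplex (x s))
    -- (i) the dynamic is no-regret
    (hnoregret : Tendsto (fun t => (1 / t) * ∑ k, regret E A x k t) atTop (𝓝 0))
    (xbar : Strat n) (hxbarΔ : JointSimplex xbar)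
    -- (ii) the time-averaged strategy μ(t) = (1/t)∫_0^t x(s) ds converges to x̄
    (hμ : Tendsto (fun t : ℝ => fun k i => (1 / t) * ∫ s in (0:ℝ)..t, x s k i)
      atTop (𝓝 xbar)) :
    -- the Time Averaged Social Welfare is asymptotically ≥ SW(x̄)
    SW E A xbar ≤ Filter.liminf (fun t => (1 / t) * ∫ s in (0:ℝ)..t, SW E A (x s)) atTop := by
  have hxm : Measurable x := measurable_pi_lambda _ fun k => measurable_pi_lambda _ (hxmeas k)
  have hμ' : Tendsto (timeAvg x) atTop (𝓝 xbar) := by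
    refine hμ.congr' ((eventually_ge_atTop 0).mono fun t ht => ?_)
    funext k i
    exact (timeAvg_apply_apply
      (continuous_id.intervalIntegrable_comp_of_jointSimplex hxm hxΔ ht) k i).symm
  let D : Strat n → ℝ := fun y => ∑ k, deviationPayoff E A k (xbar k) y
  have hD : Tendsto (fun t => D (timeAvg x t)) atTop (𝓝 (SW E A xbar)) := by
    have hDcont : Continuous D := continuous_finsetSum _ fun k _ =>
      (deviationPayoff E A k (xbar k)).continuous_of_finiteDimensional
    have hDxbar : D xbar = SW E A xbar := by simp only [D, deviationPayoff_self, SW]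
    exact hDxbar ▸ (hDcont.tendsto xbar).comp hμ'
  have hlower := hD.sub hnoregret
  rw [sub_zero] at hlower
  have hle : ∀ᶠ t in atTop, D (timeAvg x t) - (1 / t) * ∑ k, regret E A x k t
      ≤ (1 / t) * ∫ s in (0:ℝ)..t, SW E A (x s) :=
    (eventually_gt_atTop 0).mono fun t ht =>
      sum_deviationPayoff_timeAvg_sub_le E A hxm hxΔ hxbarΔ ht
  calc SW E A xbar = liminf _ atTop := hlower.liminf_eq.symm
    _ ≤ _ := liminf_le_liminf hle hlower.isBoundedUnder_ge
      (isCoboundedUnder_ge_timeAvg_SW E A hxΔ)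

theorem no_regret_learning_outperforms_equilibrium_welfare
    {N : ℕ} {n : Fin N → ℕ}
    (E : Finset (Fin N × Fin N))
    (A : ∀ k l, Matrix (Fin (n k)) (Fin (n l)) ℝ)
    -- a measurable trajectory in Δ
    (x : ℝ → Strat n) (hxmeas : ∀ k i, Measurable fun s => x s k i)
    (hxΔ : ∀ s : ℝ, 0 ≤ s → JointSimplex (x s))
    -- (i) the dynamic is no-regret
    (hnoregret : Tendsto (fun t => (1 / t) * ∑ k, regret E A x k t) atTop (𝓝 0))
    -- x̄ is an equilibrium
    (xbar : Strat n) (hxbarΔ : JointSimplex xbar)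
    (hxbar : ∀ k, ∀ zk ∈ stdSimplex ℝ (Fin (n k)),
      ∑ i, zk i * polyReward E A xbar k i ≤ ∑ i, xbar k i * polyReward E A xbar k i)
    -- (ii) the time-averaged strategy μ(t) = (1/t)∫_0^t x(s) ds converges to x̄
    (hμ : Tendsto (fun t : ℝ => fun k i => (1 / t) * ∫ s in (0:ℝ)..t, x s k i)
      atTop (𝓝 xbar)) :
    -- the Time Averaged Social Welfare is asymptotically ≥ SW(x̄)
    SW E A xbar ≤ Filter.liminf (fun t => (1 / t) * ∫ s in (0:ℝ)..t, SW E A (x s)) atTop :=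
  no_regret_learning_outperforms_equilibrium_welfare_general E A x hxmeas hxΔ hnoregret xbar hxbarΔ
    hμ
end
end

section
/- If the game Γ has a weighted monotone pseudo-gradient F with weights w_1,…,w_N > 0, then for any exploration rates T_k > 0 the pseudo-gradient F^H of the perturbed game Γ^H, defined by F^H_k(x) = −r_k(x) + T_k (ln x_k + 𝟙), is weighted strictly monotone on the interior of Δ with the same weights: ⟨x − y, F^H(x; w) − F^H(y; w)⟩ > 0 for all interior x ≠ y. -/
/-
STATEMENT 13: If the game Γ has a weighted monotone pseudo-gradient F with
weights w_1,…,w_N > 0, then for any exploration rates T_k > 0 the pseudo-gradient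
F^H of the perturbed game Γ^H, defined by F^H_k(x) = −r_k(x) + T_k (ln x_k + 𝟙),
is weighted strictly monotone on the interior of Δ with the same weights:
⟨x − y, F^H(x; w) − F^H(y; w)⟩ > 0 for all interior x ≠ y.
-/

open Filter Topology

noncomputable section

/-- The pseudo-gradient of the perturbed game `Γ^H`:
`F^H_k(x) = −r_k(x) + T_k (ln x_k + 𝟙)` (componentwise logarithm). -/
def perturbedPseudoGradient {N : ℕ} {n : Fin N → ℕ} (r : Strat n → Strat n)
    (T : Fin N → ℝ) (x : Strat n) : Strat n :=
  fun k i => - r x k i + T k * (Real.log (x k i) + 1)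

theorem perturbed_game_is_weighted_strictly_monotone
    {N : ℕ} {n : Fin N → ℕ}
    (r : Strat n → Strat n)
    (w : Fin N → ℝ) (hw : ∀ k, 0 < w k)
    -- Γ is weighted monotone with weights w
    (hmono : ∀ x y : Strat n, JointSimplex x → JointSimplex y →
      0 ≤ ∑ k, w k * ∑ i, (x k i - y k i) * ((- r x k i) - (- r y k i)))
    (T : Fin N → ℝ) (hT : ∀ k, 0 < T k) :
    ∀ x y : Strat n, JointInterior x → JointInterior y → x ≠ y →
      0 < ∑ k, w k * ∑ i, (x k i - y k i) *
        (perturbedPseudoGradient r T x k i - perturbedPseudoGradient r T y k i) := by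

  intro x y hx hy hxy
  have hxs : JointSimplex x := fun k => ⟨fun i => ((hx k).1 i).le, (hx k).2⟩
  have hys : JointSimplex y := fun k => ⟨fun i => ((hy k).1 i).le, (hy k).2⟩
  have key : ∀ k i, (x k i - y k i) *
      (perturbedPseudoGradient r T x k i - perturbedPseudoGradient r T y k i)
      = (x k i - y k i) * ((- r x k i) - (- r y k i))
        + T k * ((x k i - y k i) * (Real.log (x k i) - Real.log (y k i))) := by
    intro k i
    simp only [perturbedPseudoGradient]
    ring
  have hsplit : ∑ k, w k * ∑ i, (x k i - y k i) *
        (perturbedPseudoGradient r T x k i - perturbedPseudoGradient r T y k i)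
      = (∑ k, w k * ∑ i, (x k i - y k i) * ((- r x k i) - (- r y k i)))
        + ∑ k, w k * T k * ∑ i, (x k i - y k i) * (Real.log (x k i) - Real.log (y k i)) := by
    rw [← Finset.sum_add_distrib]
    refine Finset.sum_congr rfl fun k _ => ?_
    rw [show (∑ i, (x k i - y k i) *
        (perturbedPseudoGradient r T x k i - perturbedPseudoGradient r T y k i))
      = ∑ i, ((x k i - y k i) * ((- r x k i) - (- r y k i))
        + T k * ((x k i - y k i) * (Real.log (x k i) - Real.log (y k i)))) from
        Finset.sum_congr rfl fun i _ => key k i]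
    rw [Finset.sum_add_distrib, ← Finset.mul_sum]
    ring
  rw [hsplit]
  have hterm : ∀ k i, 0 ≤ (x k i - y k i) * (Real.log (x k i) - Real.log (y k i)) := by
    intro k i
    rcases lt_trichotomy (x k i) (y k i) with h | h | h
    · have := Real.log_lt_log ((hx k).1 i) h
      nlinarith
    · simp [h]
    · exact mul_nonneg (by linarith) (by linarith [Real.log_lt_log ((hy k).1 i) h])
  have hent : 0 < ∑ k, w k * T k * ∑ i,
      (x k i - y k i) * (Real.log (x k i) - Real.log (y k i)) := by
    obtain ⟨k0, hk0⟩ : ∃ k, x k ≠ y k := by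
      by_contra h; push_neg at h; exact hxy (funext h)
    obtain ⟨i0, hi0⟩ : ∃ i, x k0 i ≠ y k0 i := by
      by_contra h; push_neg at h; exact hk0 (funext h)
    have hinner : ∀ k, 0 ≤ ∑ i, (x k i - y k i) * (Real.log (x k i) - Real.log (y k i)) :=
      fun k => Finset.sum_nonneg fun i _ => hterm k i
    refine Finset.sum_pos' (fun k _ => mul_nonneg (mul_nonneg (hw k).le (hT k).le) (hinner k))
      ⟨k0, Finset.mem_univ k0, ?_⟩
    refine mul_pos (mul_pos (hw k0) (hT k0)) ?_
    refine Finset.sum_pos' (fun i _ => hterm k0 i) ⟨i0, Finset.mem_univ i0, ?_⟩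
    rcases hi0.lt_or_gt with h | h
    · exact mul_pos_of_neg_of_neg (by linarith)
        (by linarith [Real.log_lt_log ((hx k0).1 i0) h])
    · exact mul_pos (by linarith) (by linarith [Real.log_lt_log ((hy k0).1 i0) h])
  linarith [hmono x y hxs hys]
end
end

section
/- Every weighted zero-sum network polymatrix game Γ with weights w_1,…,w_N is weighted monotone; in fact, its pseudo-gradient satisfies ⟨x − x', F(x; w) − F(x'; w)⟩ = 0 for all x, x' ∈ Δ. -/
/-
STATEMENT 16: Every weighted zero-sum network polymatrix game Γ with weights
w_1,…,w_N is weighted monotone; in fact, its pseudo-gradient satisfies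
⟨x − x', F(x; w) − F(x'; w)⟩ = 0 for all x, x' ∈ Δ.
-/

open Filter Topology

noncomputable section

theorem weighted_zero_sum_polymatrix_is_weighted_monotone
    {N : ℕ} {n : Fin N → ℕ}
    (E : Finset (Fin N × Fin N))
    (A : ∀ k l, Matrix (Fin (n k)) (Fin (n l)) ℝ)
    (w : Fin N → ℝ) (hw : ∀ k, 0 < w k)
    -- the game is weighted zero-sum: Σ_k w_k u_k(x) = 0 on Δ
    (hzs : ∀ x : Strat n, JointSimplex x →
      ∑ k, w k * ∑ i, x k i * polyReward E A x k i = 0) :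
    -- Γ is weighted monotone …
    (∀ x y : Strat n, JointSimplex x → JointSimplex y →
      0 ≤ ∑ k, w k * ∑ i, (x k i - y k i) *
        ((- polyReward E A x k i) - (- polyReward E A y k i))) ∧
    -- … and in fact ⟨x − x', F(x; w) − F(x'; w)⟩ = 0 on Δ
    (∀ x x' : Strat n, JointSimplex x → JointSimplex x' →
      ∑ k, w k * ∑ i, (x k i - x' k i) *
        ((- polyReward E A x k i) - (- polyReward E A x' k i)) = 0) := by

  have key : ∀ x x' : Strat n, JointSimplex x → JointSimplex x' →
      ∑ k, w k * ∑ i, (x k i - x' k i) *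
        ((- polyReward E A x k i) - (- polyReward E A x' k i)) = 0 := by
    intro x x' hx hx'
    set r := polyReward E A with hr
    set m : Strat n := fun k i => (x k i + x' k i) / 2 with hm
    have hmΔ : JointSimplex m := by
      intro k
      obtain ⟨hx1, hx2⟩ := hx k
      obtain ⟨hy1, hy2⟩ := hx' k
      refine ⟨fun i => ?_, ?_⟩
      · have h1 := hx1 i; have h2 := hy1 i
        simp only [hm]; positivity
      · simp only [hm]
        rw [← Finset.sum_div, Finset.sum_add_distrib, hx2, hy2]
        norm_num
    have hrm : ∀ k i, r m k i = (r x k i + r x' k i) / 2 := by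
      intro k i
      simp only [hr, polyReward, hm]
      rw [← Finset.sum_add_distrib, Finset.sum_div]
      refine Finset.sum_congr rfl fun l _ => ?_
      rw [← Finset.sum_add_distrib, Finset.sum_div]
      refine Finset.sum_congr rfl fun j _ => ?_
      ring
    have h1 : (∑ k, w k * ∑ i, x k i * r x k i) = 0 := hzs x hx
    have h2 : (∑ k, w k * ∑ i, x' k i * r x' k i) = 0 := hzs x' hx'
    have h3 : ((∑ k, w k * ∑ i, x k i * r x k i) + (∑ k, w k * ∑ i, x k i * r x' k i)
        + (∑ k, w k * ∑ i, x' k i * r x k i) + (∑ k, w k * ∑ i, x' k i * r x' k i)) / 4 = 0 := by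
      have h := hzs m hmΔ
      rw [← h]
      rw [← Finset.sum_add_distrib, ← Finset.sum_add_distrib, ← Finset.sum_add_distrib,
        Finset.sum_div]
      refine Finset.sum_congr rfl fun k _ => ?_
      have hin : (∑ i, m k i * r m k i) = ((∑ i, x k i * r x k i) + (∑ i, x k i * r x' k i)
          + (∑ i, x' k i * r x k i) + (∑ i, x' k i * r x' k i)) / 4 := by
        rw [← Finset.sum_add_distrib, ← Finset.sum_add_distrib, ← Finset.sum_add_distrib,
          Finset.sum_div]
        refine Finset.sum_congr rfl fun i _ => ?_
        rw [hrm]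
        simp only [hm]
        ring
      rw [hin]; ring
    have htgt : (∑ k, w k * ∑ i, (x k i - x' k i) * ((- r x k i) - (- r x' k i)))
        = (∑ k, w k * ∑ i, x k i * r x' k i) + (∑ k, w k * ∑ i, x' k i * r x k i)
          - (∑ k, w k * ∑ i, x k i * r x k i) - (∑ k, w k * ∑ i, x' k i * r x' k i) := by
      rw [← Finset.sum_add_distrib, ← Finset.sum_sub_distrib, ← Finset.sum_sub_distrib]
      refine Finset.sum_congr rfl fun k _ => ?_
      have hin : (∑ i, (x k i - x' k i) * ((- r x k i) - (- r x' k i)))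
          = (∑ i, x k i * r x' k i) + (∑ i, x' k i * r x k i)
            - (∑ i, x k i * r x k i) - (∑ i, x' k i * r x' k i) := by
        rw [← Finset.sum_add_distrib, ← Finset.sum_sub_distrib, ← Finset.sum_sub_distrib]
        refine Finset.sum_congr rfl fun i _ => ?_
        ring
      rw [hin]; ring
    rw [htgt]; linarith
  exact ⟨fun x y hx hy => le_of_eq (key x y hx hy).symm, key⟩
end
end
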